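/- Let H be a real inner product space, let C = {W ∈ H : ‖W‖ ≤ 1/√λ} for λ > 0, let f_t : H → R be λ-strongly convex with subgradient ∇^t at a point W^t ∈ C, let W* ∈ C, let Δ^t ∈ H, and set ∇̄^t = ∇^t + Δ^t with ‖∇̄^t‖ ≤ G. If W^{t+1} = Π_C(W^t − η_t ∇̄^t) for a step size η_t > 0, where Π_C is the metric projection onto C, then the progress quantity D_t = ‖W^t − W*‖² − ‖W^{t+1} − W*‖² satisfies D_t ≥ −η_t²G² + 2η_t(f_t(W^t) − f_t(W*) + (λ/2)‖W^t − W*‖²) − 4η_t‖Δ^t‖/√λ. -/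
import Mathlib


open scoped RealInnerProductSpace

/-- One-step progress bound for projected subgradient descent with an inexact
subgradient: if `W^{t+1} = Π_C(W^t - η_t(∇^t + Δ^t))` with `C` the ball of radius `1/√λ`,
`∇^t` a subgradient of the `λ`-strongly convex `f_t` at `W^t ∈ C`, `W* ∈ C`, and
`‖∇^t + Δ^t‖ ≤ G`, then
`D_t ≥ -η_t²G² + 2η_t(f_t(W^t) - f_t(W*) + (λ/2)‖W^t - W*‖²) - 4η_t‖Δ^t‖/√λ`. -/
theorem statement6
    {H : Type*} [NormedAddCommGroup H] [InnerProductSpace ℝ H]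
    (lam : ℝ) (hlam : 0 < lam)
    (Cset : Set H) (hCset : Cset = {V : H | ‖V‖ ≤ 1 / Real.sqrt lam})
    (ft : H → ℝ) (Wt Wstar : H)
    (hWt : Wt ∈ Cset) (hWstar : Wstar ∈ Cset)
    (grad Δ : H) (G ηt : ℝ) (hηt : 0 < ηt)
    -- `grad` is a subgradient of the `λ`-strongly convex `f_t` at `W^t`:
    -- `⟨W^t - V, ∇^t⟩ ≥ f_t(W^t) - f_t(V) + (λ/2)‖W^t - V‖²` for all `V`
    (hsub : ∀ V, ⟪Wt - V, grad⟫ ≥ ft Wt - ft V + lam / 2 * ‖Wt - V‖ ^ 2)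
    (hG : ‖grad + Δ‖ ≤ G)
    -- `proj` is the metric projection onto the closed convex set `C`
    (proj : H → H)
    (hproj_mem : ∀ u, proj u ∈ Cset)
    (hproj_contract : ∀ u, ∀ v ∈ Cset, ‖proj u - v‖ ≤ ‖u - v‖)
    (Wt1 : H) (hupd : Wt1 = proj (Wt - ηt • (grad + Δ))) :
    ‖Wt - Wstar‖ ^ 2 - ‖Wt1 - Wstar‖ ^ 2
      ≥ -ηt ^ 2 * G ^ 2 + 2 * ηt * (ft Wt - ft Wstar + lam / 2 * ‖Wt - Wstar‖ ^ 2)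
        - 4 * ηt * ‖Δ‖ / Real.sqrt lam := by

  set g := grad + Δ with hg
  have hcontr : ‖Wt1 - Wstar‖ ≤ ‖Wt - ηt • g - Wstar‖ := by
    rw [hupd]; exact hproj_contract _ _ hWstar
  have hsq : ‖Wt1 - Wstar‖ ^ 2 ≤ ‖(Wt - Wstar) - ηt • g‖ ^ 2 := by
    have h1 : (0:ℝ) ≤ ‖Wt1 - Wstar‖ := norm_nonneg _
    have : Wt - ηt • g - Wstar = (Wt - Wstar) - ηt • g := by abel
    rw [← this]
    exact pow_le_pow_left₀ h1 hcontr 2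
  have hexp : ‖(Wt - Wstar) - ηt • g‖ ^ 2
      = ‖Wt - Wstar‖ ^ 2 - 2 * (ηt * ⟪Wt - Wstar, g⟫) + ηt ^ 2 * ‖g‖ ^ 2 := by
    rw [norm_sub_sq_real, real_inner_smul_right, norm_smul]
    simp [mul_pow, abs_of_pos hηt]
    try ring
  have hGsq : ηt ^ 2 * ‖g‖ ^ 2 ≤ ηt ^ 2 * G ^ 2 := by
    have h1 : ‖g‖ ^ 2 ≤ G ^ 2 := by nlinarith [norm_nonneg g]
    exact mul_le_mul_of_nonneg_left h1 (sq_nonneg ηt)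
  have hinner : ⟪Wt - Wstar, g⟫ = ⟪Wt - Wstar, grad⟫ + ⟪Wt - Wstar, Δ⟫ := by
    rw [hg, inner_add_right]
  have hnormWt : ‖Wt‖ ≤ 1 / Real.sqrt lam := by rw [hCset] at hWt; exact hWt
  have hnormWs : ‖Wstar‖ ≤ 1 / Real.sqrt lam := by rw [hCset] at hWstar; exact hWstar
  have hdist : ‖Wt - Wstar‖ ≤ 2 / Real.sqrt lam := by
    calc ‖Wt - Wstar‖ ≤ ‖Wt‖ + ‖Wstar‖ := norm_sub_le _ _
    _ ≤ 2 / Real.sqrt lam := by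
      have h2 : 1 / Real.sqrt lam + 1 / Real.sqrt lam = 2 / Real.sqrt lam := by ring
      linarith
  have hDelta : ⟪Wt - Wstar, Δ⟫ ≥ -(2 / Real.sqrt lam * ‖Δ‖) := by
    have h1 : |⟪Wt - Wstar, Δ⟫| ≤ ‖Wt - Wstar‖ * ‖Δ‖ := abs_real_inner_le_norm _ _
    have h2 : ‖Wt - Wstar‖ * ‖Δ‖ ≤ 2 / Real.sqrt lam * ‖Δ‖ :=
      mul_le_mul_of_nonneg_right hdist (norm_nonneg _)
    have := neg_abs_le ⟪Wt - Wstar, Δ⟫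
    linarith
  have hsubW := hsub Wstar
  have hslam : 0 < Real.sqrt lam := Real.sqrt_pos.mpr hlam
  have key : ‖Wt1 - Wstar‖ ^ 2 ≤ ‖Wt - Wstar‖ ^ 2
      - 2 * (ηt * (ft Wt - ft Wstar + lam / 2 * ‖Wt - Wstar‖ ^ 2 - 2 / Real.sqrt lam * ‖Δ‖))
      + ηt ^ 2 * G ^ 2 := by
    rw [hexp] at hsq
    nlinarith [hsq, hGsq, hinner, hDelta, hsubW]
  have h4 : 4 * ηt * ‖Δ‖ / Real.sqrt lam = 2 * ηt * (2 / Real.sqrt lam * ‖Δ‖) := by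
    field_simp; ring
  rw [ge_iff_le]
  rw [h4]
  nlinarith [key]
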